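/- Let d ≥ 1, let μ be a Borel probability measure on ℝ^d, and let x : [0,1]^d → ℝ^d be a Borel map such that the pushforward of the Lebesgue measure on [0,1]^d under x equals μ. Let (Ω, F, P) be a probability space carrying a measurable χ : Ω → ℝ^d with law μ and a measurable U : Ω → [0,1] that is uniformly distributed on [0,1] and independent of χ. Then there exists a measurable ξ : Ω → [0,1]^d whose law under P is the Lebesgue measure on [0,1]^d and such that x(ξ) = χ P-almost surely. -/

import Mathlib

/-!
The joint law `ρ` of `(x c, c)` under the cube measure has first marginal `μ` and is carried by
the graph of `x`. Disintegrate `ρ = μ ⊗ κ` and represent the kernel as `κ y = Law (f y ·)` under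
Lebesgue measure on `[0,1]`. By independence `(χ, f χ U)` has law `μ ⊗ κ = ρ`, so `ξ := f χ U`
is uniform on the cube and `(χ, ξ)` lies on the graph of `x` almost surely.
-/

open MeasureTheory

/-- Lebesgue measure on the cube `[0,1]^d`. -/
noncomputable def cubeMeasure (d : ℕ) : Measure (Fin d → Set.Icc (0:ℝ) 1) :=
  Measure.pi fun _ => (volume : Measure (Set.Icc (0:ℝ) 1))

open ProbabilityTheory unitInterval

lemma MeasureTheory.Measure.map_prodMk_prod_volume_eq_compProd {α β : Type*}
    [MeasurableSpace α] [MeasurableSpace β] (μ : Measure α) [SFinite μ] (κ : Kernel α β)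
    [IsSFiniteKernel κ] (f : α → I → β) (hf : Measurable (Function.uncurry f))
    (hfκ : ∀ a, volume.map (f a) = κ a) :
    (μ.prod volume).map (fun p => (p.1, f p.1 p.2)) = μ ⊗ₘ κ := by
  have hΦ : Measurable fun p : α × I => (p.1, f p.1 p.2) := measurable_fst.prodMk hf
  ext s hs
  rw [Measure.map_apply hΦ hs, Measure.prod_apply (hΦ hs), Measure.compProd_apply hs]
  refine lintegral_congr fun a => ?_
  rw [← hfκ a, Measure.map_apply hf.of_uncurry_left (measurable_prodMk_left hs)]
  rfl

theorem ProbabilityTheory.exists_measurable_map_prodMk_eq {α β Ω : Type*} [MeasurableSpace α]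
    [MeasurableSpace β] [StandardBorelSpace β] [Nonempty β] [MeasurableSpace Ω]
    (P : Measure Ω) [IsFiniteMeasure P] (ρ : Measure (α × β)) [IsFiniteMeasure ρ]
    {χ : Ω → α} (hχ : Measurable χ) (hχlaw : P.map χ = ρ.fst)
    {U : Ω → I} (hU : Measurable U) (hUlaw : P.map U = volume) (hindep : IndepFun χ U P) :
    ∃ ξ : Ω → β, Measurable ξ ∧ P.map (fun ω => (χ ω, ξ ω)) = ρ := by
  obtain ⟨f, hf, hfκ⟩ := ρ.condKernel.exists_measurable_map_eq_unitInterval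
  have hpair : P.map (fun ω => (χ ω, U ω)) = ρ.fst.prod volume := by
    rw [← hχlaw, ← hUlaw]
    exact (indepFun_iff_map_prod_eq_prod_map_map hχ.aemeasurable hU.aemeasurable).mp hindep
  refine ⟨fun ω => f (χ ω) (U ω), hf.comp (hχ.prodMk hU), ?_⟩
  rw [← ρ.disintegrate ρ.condKernel, ← Measure.map_prodMk_prod_volume_eq_compProd _ _ f hf hfκ,
    ← hpair]
  exact (Measure.map_map (measurable_fst.prodMk hf) (hχ.prodMk hU)).symm

theorem stmt_12_general (d : ℕ)
    (μ : Measure (EuclideanSpace ℝ (Fin d)))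
    (x : (Fin d → Set.Icc (0:ℝ) 1) → EuclideanSpace ℝ (Fin d)) (hx : Measurable x)
    (hpush : (cubeMeasure d).map x = μ)
    {Ω : Type*} [MeasurableSpace Ω] (P : Measure Ω) [IsProbabilityMeasure P]
    (χ : Ω → EuclideanSpace ℝ (Fin d)) (hχ : Measurable χ) (hχlaw : P.map χ = μ)
    (U : Ω → Set.Icc (0:ℝ) 1) (hU : Measurable U)
    (hUlaw : P.map U = (volume : Measure (Set.Icc (0:ℝ) 1)))
    (hindep : ProbabilityTheory.IndepFun U χ P) :
    ∃ ξ : Ω → (Fin d → Set.Icc (0:ℝ) 1),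
      Measurable ξ ∧ P.map ξ = cubeMeasure d ∧ ∀ᵐ ω ∂P, x (ξ ω) = χ ω := by
  have hgraph : Measurable fun c => (x c, c) := hx.prodMk measurable_id
  have : IsProbabilityMeasure (cubeMeasure d) := by unfold cubeMeasure; infer_instance
  set ρ := (cubeMeasure d).map fun c => (x c, c)
  have : IsProbabilityMeasure ρ := Measure.isProbabilityMeasure_map hgraph.aemeasurable
  have hρfst : ρ.fst = μ := by rw [Measure.fst_map_prodMk measurable_id', hpush]
  obtain ⟨ξ, hξ, hlaw⟩ := exists_measurable_map_prodMk_eq P ρ hχ (hχlaw.trans hρfst.symm) hU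
    hUlaw hindep.symm
  refine ⟨ξ, hξ, ?_, ?_⟩
  · rw [← Measure.snd_map_prodMk hχ, hlaw, Measure.snd_map_prodMk hx, Measure.map_id']
  · have hρgraph : ∀ᵐ p ∂ρ, x p.2 = p.1 :=
      (ae_map_iff hgraph.aemeasurable (measurableSet_eq_fun (hx.comp measurable_snd)
        measurable_fst)).mpr (Filter.Eventually.of_forall fun _ => rfl)
    rw [← hlaw] at hρgraph
    exact ae_of_ae_map (hχ.prodMk hξ).aemeasurable hρgraph

theorem stmt_12 (d : ℕ) (hd : 1 ≤ d)
    (μ : Measure (EuclideanSpace ℝ (Fin d))) [IsProbabilityMeasure μ]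
    (x : (Fin d → Set.Icc (0:ℝ) 1) → EuclideanSpace ℝ (Fin d)) (hx : Measurable x)
    (hpush : (cubeMeasure d).map x = μ)
    {Ω : Type*} [MeasurableSpace Ω] (P : Measure Ω) [IsProbabilityMeasure P]
    (χ : Ω → EuclideanSpace ℝ (Fin d)) (hχ : Measurable χ) (hχlaw : P.map χ = μ)
    (U : Ω → Set.Icc (0:ℝ) 1) (hU : Measurable U)
    (hUlaw : P.map U = (volume : Measure (Set.Icc (0:ℝ) 1)))
    (hindep : ProbabilityTheory.IndepFun U χ P) :
    ∃ ξ : Ω → (Fin d → Set.Icc (0:ℝ) 1),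
      Measurable ξ ∧ P.map ξ = cubeMeasure d ∧ ∀ᵐ ω ∂P, x (ξ ω) = χ ω :=
  stmt_12_general d μ x hx hpush P χ hχ hχlaw U hU hUlaw hindep
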